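/- Let φ_t be the smooth flow of a smooth time-dependent velocity field v on ℝ³, and let γ_t = φ_t ∘ γ₀ be the image of a smooth closed curve γ₀. If along the flow the acceleration is a gradient, i.e. dv/dt = ∂v/∂t + (∂v/∂x)v = −grad ψ(t,x) for some smooth ψ, then the circulation ∮_{γ_t} v · dℓ is constant in time (Kelvin's circulation theorem for barotropic fluids). -/

import Mathlib

open Matrix intervalIntegral

open MeasureTheory

section KelvinHelpers

lemma hasDerivAt_dot {f g : ℝ → Fin 3 → ℝ} {f' g' : Fin 3 → ℝ} {x : ℝ}
    (hf : HasDerivAt f f' x) (hg : HasDerivAt g g' x) :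
    HasDerivAt (fun y => f y ⬝ᵥ g y) (f' ⬝ᵥ g x + f x ⬝ᵥ g') x := by
  have h : ∀ i ∈ Finset.univ, HasDerivAt (fun y => f y i * g y i)
      (f' i * g x i + f x i * g' i) x := by
    intro i _
    have hfi : HasDerivAt (fun y => f y i) (f' i) x := by
      exact (ContinuousLinearMap.proj (R := ℝ) (φ := fun _ : Fin 3 => ℝ) i).hasFDerivAt.comp_hasDerivAt x hf
    have hgi : HasDerivAt (fun y => g y i) (g' i) x := by
      exact (ContinuousLinearMap.proj (R := ℝ) (φ := fun _ : Fin 3 => ℝ) i).hasFDerivAt.comp_hasDerivAt x hg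
    exact hfi.mul hgi
  simpa [dotProduct, Finset.sum_add_distrib] using HasDerivAt.fun_sum h

lemma continuous_dot {X : Type*} [TopologicalSpace X] {f g : X → Fin 3 → ℝ}
    (hf : Continuous f) (hg : Continuous g) : Continuous fun x => f x ⬝ᵥ g x := by
  simp only [dotProduct]
  exact continuous_finset_sum _ fun i _ =>
    ((continuous_apply i).comp hf).mul ((continuous_apply i).comp hg)

variable {W : Type*} [NormedAddCommGroup W] [NormedSpace ℝ W]
variable {α : Type*} [NormedAddCommGroup α] [NormedSpace ℝ α]

lemma hasDerivAt_slice1 {f : ℝ × α → W} (hf : ContDiff ℝ (⊤ : ℕ∞) f) (t : ℝ) (u : α) :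
    HasDerivAt (fun s => f (s, u)) (fderiv ℝ f (t, u) (1, 0)) t :=
  (hf.differentiable (by simp) (t, u)).hasFDerivAt.comp_hasDerivAt t
    ((hasDerivAt_id t).prodMk (hasDerivAt_const t u))

lemma hasDerivAt_slice2 {f : ℝ × ℝ → W} (hf : ContDiff ℝ (⊤ : ℕ∞) f) (t u : ℝ) :
    HasDerivAt (fun w => f (t, w)) (fderiv ℝ f (t, u) (0, 1)) u :=
  (hf.differentiable (by simp) (t, u)).hasFDerivAt.comp_hasDerivAt u
    ((hasDerivAt_const u t).prodMk (hasDerivAt_id u))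

lemma fderiv_slice2 {f : ℝ × α → W} (hf : ContDiff ℝ (⊤ : ℕ∞) f) (t : ℝ) (x y : α) :
    fderiv ℝ (fun z => f (t, z)) x y = fderiv ℝ f (t, x) (0, y) := by
  have h : HasFDerivAt (fun z : α => f (t, z))
      ((fderiv ℝ f (t, x)).comp (ContinuousLinearMap.inr ℝ ℝ α)) x := by
    have := (hf.differentiable (by simp) (t, x)).hasFDerivAt.comp x
      (((hasFDerivAt_const t x)).prodMk (hasFDerivAt_id x))
    exact this
  rw [h.fderiv]; rfl

lemma interval_swap_core (f : ℝ × ℝ → ℝ) (hf : Continuous f) {a b c d : ℝ}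
    (hab : a ≤ b) (hcd : c ≤ d) :
    ∫ x in a..b, ∫ y in c..d, f (x, y) = ∫ y in c..d, ∫ x in a..b, f (x, y) := by
  simp only [intervalIntegral.integral_of_le hab, intervalIntegral.integral_of_le hcd]
  have hi : Integrable (Function.uncurry fun x y => f (x, y))
      ((volume.restrict (Set.Ioc a b)).prod (volume.restrict (Set.Ioc c d))) := by
    rw [Measure.prod_restrict]
    have : IntegrableOn f (Set.Icc a b ×ˢ Set.Icc c d) (volume.prod volume) :=
      hf.continuousOn.integrableOn_compact (isCompact_Icc.prod isCompact_Icc)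
    exact (this.mono_set (Set.prod_mono Set.Ioc_subset_Icc_self Set.Ioc_subset_Icc_self))
  exact MeasureTheory.integral_integral_swap hi

lemma interval_swap (f : ℝ × ℝ → ℝ) (hf : Continuous f) (a b c d : ℝ) :
    ∫ x in a..b, ∫ y in c..d, f (x, y) = ∫ y in c..d, ∫ x in a..b, f (x, y) := by
  rcases le_total a b with hab | hab <;> rcases le_total c d with hcd | hcd
  · exact interval_swap_core f hf hab hcd
  · calc ∫ x in a..b, ∫ y in c..d, f (x, y)
        = ∫ x in a..b, -∫ y in d..c, f (x, y) := by
          refine intervalIntegral.integral_congr fun x _ => ?_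
          rw [intervalIntegral.integral_symm d c]
      _ = -∫ y in d..c, ∫ x in a..b, f (x, y) := by
          rw [intervalIntegral.integral_neg, interval_swap_core f hf hab hcd]
      _ = ∫ y in c..d, ∫ x in a..b, f (x, y) := by
          rw [intervalIntegral.integral_symm d c]
  · calc ∫ x in a..b, ∫ y in c..d, f (x, y)
        = -∫ x in b..a, ∫ y in c..d, f (x, y) := by
          rw [intervalIntegral.integral_symm b a]
      _ = -∫ y in c..d, ∫ x in b..a, f (x, y) := by
          rw [interval_swap_core f hf hab hcd]
      _ = ∫ y in c..d, ∫ x in a..b, f (x, y) := by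
          rw [← intervalIntegral.integral_neg]
          refine intervalIntegral.integral_congr fun y _ => ?_
          rw [intervalIntegral.integral_symm b a]
  · calc ∫ x in a..b, ∫ y in c..d, f (x, y)
        = -∫ x in b..a, ∫ y in c..d, f (x, y) := by
          rw [intervalIntegral.integral_symm b a]
      _ = -∫ x in b..a, -∫ y in d..c, f (x, y) := by
          congr 1
          refine intervalIntegral.integral_congr fun x _ => ?_
          rw [intervalIntegral.integral_symm d c]
      _ = ∫ y in d..c, ∫ x in b..a, f (x, y) := by
          rw [intervalIntegral.integral_neg, neg_neg, interval_swap_core f hf hab hcd]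
      _ = ∫ y in c..d, ∫ x in a..b, f (x, y) := by
          rw [intervalIntegral.integral_symm c d]
          rw [← intervalIntegral.integral_neg]
          refine intervalIntegral.integral_congr fun y _ => ?_
          rw [intervalIntegral.integral_symm b a]

end KelvinHelpers

/-- partial time derivative of a time-dependent vector field -/
noncomputable def dtv (f : ℝ × (Fin 3 → ℝ) → (Fin 3 → ℝ)) (p : ℝ × (Fin 3 → ℝ)) : Fin 3 → ℝ :=
  deriv (fun s => f (s, p.2)) p.1

/-- spatial Jacobian applied to a vector -/
noncomputable def dxv (f : ℝ × (Fin 3 → ℝ) → (Fin 3 → ℝ)) (p : ℝ × (Fin 3 → ℝ))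
    (u : Fin 3 → ℝ) : Fin 3 → ℝ :=
  fderiv ℝ (fun y => f (p.1, y)) p.2 u

/-- spatial gradient of a scalar field -/
noncomputable def grads (f : ℝ × (Fin 3 → ℝ) → ℝ) (p : ℝ × (Fin 3 → ℝ)) : Fin 3 → ℝ :=
  fun i => fderiv ℝ (fun y => f (p.1, y)) p.2 (Pi.single i 1)

section KelvinHelpers2

lemma dtv_eq {v : ℝ × (Fin 3 → ℝ) → (Fin 3 → ℝ)} (hv : ContDiff ℝ (⊤ : ℕ∞) v)
    (p : ℝ × (Fin 3 → ℝ)) : dtv v p = fderiv ℝ v p (1, 0) := by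
  have := (hasDerivAt_slice1 hv p.1 p.2).deriv
  simpa [dtv] using this

lemma dxv_eq {v : ℝ × (Fin 3 → ℝ) → (Fin 3 → ℝ)} (hv : ContDiff ℝ (⊤ : ℕ∞) v)
    (p : ℝ × (Fin 3 → ℝ)) (y : Fin 3 → ℝ) : dxv v p y = fderiv ℝ v p (0, y) := by
  have := fderiv_slice2 hv p.1 p.2 y
  simpa [dxv] using this

lemma grads_dot {ψ : ℝ × (Fin 3 → ℝ) → ℝ} (hψ : ContDiff ℝ (⊤ : ℕ∞) ψ)
    (p : ℝ × (Fin 3 → ℝ)) (w : Fin 3 → ℝ) :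
    grads ψ p ⬝ᵥ w = fderiv ℝ ψ p (0, w) := by
  have hsum : ((0 : ℝ), w) = ∑ i : Fin 3, w i • ((0 : ℝ), (Pi.single i 1 : Fin 3 → ℝ)) := by
    refine Prod.ext ?_ ?_
    · rw [Prod.fst_sum]; simp
    · rw [Prod.snd_sum]
      funext j
      simp [Pi.single_apply]
  rw [hsum, map_sum]
  simp only [_root_.map_smul]
  have h : ∀ i, grads ψ p i = fderiv ℝ ψ p (0, Pi.single i 1) := fun i =>
    fderiv_slice2 hψ p.1 p.2 (Pi.single i 1)
  simp [dotProduct, h, mul_comm]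

end KelvinHelpers2

/-- circulation of `v` at time `t` around the image under the flow `φ` of the closed
curve `γ₀` (parametrized over `[0,1]`) -/
noncomputable def circulation (v : ℝ × (Fin 3 → ℝ) → (Fin 3 → ℝ))
    (φ : ℝ → (Fin 3 → ℝ) → (Fin 3 → ℝ)) (γ₀ : ℝ → (Fin 3 → ℝ)) (t : ℝ) : ℝ :=
  ∫ u in (0:ℝ)..1, v (t, φ t (γ₀ u)) ⬝ᵥ deriv (fun w => φ t (γ₀ w)) u

/-- Kelvin's circulation theorem, barotropic case: if the material
acceleration is a gradient, `∂v/∂t + (∂v/∂x)v = −grad ψ`, the circulation around a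
closed fluid curve moving with the flow is constant in time. -/
theorem stmt13
    (v : ℝ × (Fin 3 → ℝ) → (Fin 3 → ℝ)) (hv : ContDiff ℝ (⊤ : ℕ∞) v)
    (ψ : ℝ × (Fin 3 → ℝ) → ℝ) (hψ : ContDiff ℝ (⊤ : ℕ∞) ψ)
    (haccel : ∀ p, dtv v p + dxv v p (v p) = -grads ψ p)
    (φ : ℝ → (Fin 3 → ℝ) → (Fin 3 → ℝ))
    (hφ : ContDiff ℝ (⊤ : ℕ∞) (fun p : ℝ × (Fin 3 → ℝ) => φ p.1 p.2))
    (hφ0 : ∀ x, φ 0 x = x)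
    (hflow : ∀ t x, deriv (fun τ => φ τ x) t = v (t, φ t x))
    (γ₀ : ℝ → (Fin 3 → ℝ)) (hγ : ContDiff ℝ (⊤ : ℕ∞) γ₀)
    (hclosed : ∀ u, γ₀ (u + 1) = γ₀ u) :
    ∀ t, circulation v φ γ₀ t = circulation v φ γ₀ 0 := by
  intro t
  -- the curve as a function of both time and parameter
  set F : ℝ × ℝ → (Fin 3 → ℝ) := fun p => φ p.1 (γ₀ p.2) with hFdef
  have hF : ContDiff ℝ (⊤ : ℕ∞) F := hφ.comp (contDiff_fst.prodMk (hγ.comp contDiff_snd))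
  set σ : ℝ × ℝ → ℝ × (Fin 3 → ℝ) := fun p => (p.1, F p) with hσdef
  have hσ : ContDiff ℝ (⊤ : ℕ∞) σ := contDiff_fst.prodMk hF
  have hvσ : ContDiff ℝ (⊤ : ℕ∞) (fun p => v (σ p)) := hv.comp hσ
  have hψσ : ContDiff ℝ (⊤ : ℕ∞) (fun p => ψ (σ p)) := hψ.comp hσ
  -- spatial derivative of the curve
  set Wd : ℝ × ℝ → (Fin 3 → ℝ) := fun p => fderiv ℝ F p (0, 1) with hWdef
  have hW : ContDiff ℝ (⊤ : ℕ∞) Wd := (hF.fderiv_right (by simp)).clm_apply contDiff_const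
  -- time derivative of the curve is the velocity field
  have hFt : ∀ p : ℝ × ℝ, fderiv ℝ F p (1, 0) = v (σ p) := by
    intro p
    have h1 := (hasDerivAt_slice1 hF p.1 p.2).deriv
    have h2 : deriv (fun τ => F (τ, p.2)) p.1 = v (p.1, φ p.1 (γ₀ p.2)) := hflow p.1 (γ₀ p.2)
    rw [← h1] at *
    exact h2
  -- chain rule for v ∘ σ and ψ ∘ σ
  have hσfd : ∀ p : ℝ × ℝ, HasFDerivAt σ
      ((ContinuousLinearMap.fst ℝ ℝ ℝ).prod (fderiv ℝ F p)) p := fun p =>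
    (hasFDerivAt_fst).prodMk (hF.differentiable (by simp) p).hasFDerivAt
  have hvchain : ∀ (p : ℝ × ℝ) (e : ℝ × ℝ),
      fderiv ℝ (fun q => v (σ q)) p e = fderiv ℝ v (σ p) (e.1, fderiv ℝ F p e) := by
    intro p e
    have h := ((hv.differentiable (by simp) (σ p)).hasFDerivAt.comp p (hσfd p)).fderiv
    rw [show (fun q => v (σ q)) = v ∘ σ from rfl, h]
    rfl
  have hψchain : ∀ (p : ℝ × ℝ) (e : ℝ × ℝ),
      fderiv ℝ (fun q => ψ (σ q)) p e = fderiv ℝ ψ (σ p) (e.1, fderiv ℝ F p e) := by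
    intro p e
    have h := ((hψ.differentiable (by simp) (σ p)).hasFDerivAt.comp p (hσfd p)).fderiv
    rw [show (fun q => ψ (σ q)) = ψ ∘ σ from rfl, h]
    rfl
  -- the material derivative is a gradient
  have hmat : ∀ p : ℝ × ℝ, fderiv ℝ (fun q => v (σ q)) p (1, 0) = -grads ψ (σ p) := by
    intro p
    rw [hvchain p (1, 0), hFt p]
    have hdecomp : ((1 : ℝ), v (σ p)) = ((1 : ℝ), (0 : Fin 3 → ℝ)) + ((0 : ℝ), v (σ p)) := by
      simp
    rw [hdecomp, map_add, ← dtv_eq hv (σ p), ← dxv_eq hv (σ p) (v (σ p))]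
    exact haccel (σ p)
  -- Clairaut: mixed partials commute
  have hclair : ∀ p : ℝ × ℝ, fderiv ℝ Wd p (1, 0) = fderiv ℝ (fun q => v (σ q)) p (0, 1) := by
    intro p
    have hdF : ∀ q : ℝ × ℝ, HasFDerivAt F (fderiv ℝ F q) q := fun q =>
      (hF.differentiable (by simp) q).hasFDerivAt
    have hdF2 : HasFDerivAt (fderiv ℝ F) (fderiv ℝ (fderiv ℝ F) p) p :=
      (((hF.fderiv_right (m := (⊤ : ℕ∞)) (by simp)).differentiable (by simp)) p).hasFDerivAt
    have happly : ∀ (e e' : ℝ × ℝ),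
        fderiv ℝ (fun q => fderiv ℝ F q e) p e' = fderiv ℝ (fderiv ℝ F) p e' e := by
      intro e e'
      have h := ((ContinuousLinearMap.apply ℝ (Fin 3 → ℝ) e).hasFDerivAt.comp p hdF2).fderiv
      rw [show (fun q => fderiv ℝ F q e) = (ContinuousLinearMap.apply ℝ (Fin 3 → ℝ) e) ∘ (fderiv ℝ F) from rfl, h]
      rfl
    have hsymm := second_derivative_symmetric hdF hdF2 (0, 1) (1, 0)
    calc fderiv ℝ Wd p (1, 0) = fderiv ℝ (fderiv ℝ F) p (1, 0) (0, 1) := happly (0, 1) (1, 0)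
      _ = fderiv ℝ (fderiv ℝ F) p (0, 1) (1, 0) := hsymm.symm
      _ = fderiv ℝ (fun q => fderiv ℝ F q (1, 0)) p (0, 1) := (happly (1, 0) (0, 1)).symm
      _ = fderiv ℝ (fun q => v (σ q)) p (0, 1) := by
          congr 1
          exact congrArg (fderiv ℝ · p) (funext fun q => hFt q)
  -- the t-derivative of the integrand
  set DtG : ℝ × ℝ → ℝ := fun p =>
    fderiv ℝ (fun q => v (σ q)) p (1, 0) ⬝ᵥ Wd p
      + v (σ p) ⬝ᵥ fderiv ℝ (fun q => v (σ q)) p (0, 1) with hDtGdef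
  have hDtGcont : Continuous DtG := by
    have hc : ContDiff ℝ (⊤ : ℕ∞) fun p : ℝ × ℝ => fderiv ℝ (fun q => v (σ q)) p :=
      hvσ.fderiv_right (by simp)
    have h1 : Continuous fun p : ℝ × ℝ => fderiv ℝ (fun q => v (σ q)) p (1, 0) :=
      (hc.clm_apply contDiff_const).continuous
    have h2 : Continuous fun p : ℝ × ℝ => fderiv ℝ (fun q => v (σ q)) p (0, 1) :=
      (hc.clm_apply contDiff_const).continuous
    exact (continuous_dot h1 hW.continuous).add (continuous_dot hvσ.continuous h2)
  -- key derivative in time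
  have key1 : ∀ s u : ℝ, HasDerivAt (fun τ => v (σ (τ, u)) ⬝ᵥ Wd (τ, u)) (DtG (s, u)) s := by
    intro s u
    have h := hasDerivAt_dot (hasDerivAt_slice1 hvσ s u) (hasDerivAt_slice1 hW s u)
    rw [hDtGdef]
    simpa [hclair (s, u)] using h
  -- key derivative in the curve parameter
  have key2 : ∀ s u : ℝ, HasDerivAt
      (fun w => (v (σ (s, w)) ⬝ᵥ v (σ (s, w))) / 2 - ψ (σ (s, w))) (DtG (s, u)) u := by
    intro s u
    have h1 := hasDerivAt_slice2 hvσ s u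
    have hdot := (hasDerivAt_dot h1 h1).div_const 2
    have hψ1 := hasDerivAt_slice2 hψσ s u
    have h := hdot.sub hψ1
    have e1 : fderiv ℝ (fun q => v (σ q)) (s, u) (0, 1) ⬝ᵥ v (σ (s, u))
        = v (σ (s, u)) ⬝ᵥ fderiv ℝ (fun q => v (σ q)) (s, u) (0, 1) := dotProduct_comm _ _
    have e2 : fderiv ℝ (fun q => ψ (σ q)) (s, u) (0, 1)
        = grads ψ (σ (s, u)) ⬝ᵥ Wd (s, u) := by
      rw [hψchain (s, u) (0, 1), grads_dot hψ (σ (s, u)) (Wd (s, u))]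
    have e3 : DtG (s, u) = (fderiv ℝ (fun q => v (σ q)) (s, u) (0, 1) ⬝ᵥ v (σ (s, u))
        + v (σ (s, u)) ⬝ᵥ fderiv ℝ (fun q => v (σ q)) (s, u) (0, 1)) / 2
        - fderiv ℝ (fun q => ψ (σ q)) (s, u) (0, 1) := by
      rw [hDtGdef, e2, e1]
      simp only [hmat (s, u), neg_dotProduct]
      ring
    rw [e3] at *
    exact h
  -- circulation in terms of F
  have hcirc : ∀ τ : ℝ, circulation v φ γ₀ τ = ∫ u in (0:ℝ)..1, v (σ (τ, u)) ⬝ᵥ Wd (τ, u) := by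
    intro τ
    refine intervalIntegral.integral_congr fun u _ => ?_
    have h : deriv (fun w => F (τ, w)) u = Wd (τ, u) := (hasDerivAt_slice2 hF τ u).deriv
    show v (τ, φ τ (γ₀ u)) ⬝ᵥ deriv (fun w => φ τ (γ₀ w)) u = _
    rw [show (fun w => φ τ (γ₀ w)) = fun w => F (τ, w) from rfl, h]
  -- integrability facts
  have hGcont : Continuous fun p : ℝ × ℝ => v (σ p) ⬝ᵥ Wd p :=
    continuous_dot hvσ.continuous hW.continuous
  have hGint : ∀ τ : ℝ, IntervalIntegrable (fun u => v (σ (τ, u)) ⬝ᵥ Wd (τ, u)) volume 0 1 :=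
    fun τ => (hGcont.comp (continuous_const.prodMk continuous_id)).intervalIntegrable 0 1
  -- FTC in time, for each u
  have hFTCt : ∀ u : ℝ, v (σ (t, u)) ⬝ᵥ Wd (t, u) - v (σ (0, u)) ⬝ᵥ Wd (0, u)
      = ∫ s in (0:ℝ)..t, DtG (s, u) := by
    intro u
    rw [intervalIntegral.integral_eq_sub_of_hasDerivAt (fun s _ => key1 s u)
      ((hDtGcont.comp (continuous_id.prodMk continuous_const)).intervalIntegrable 0 t)]
  -- FTC in the parameter: the inner integral vanishes
  have hγ01 : γ₀ 1 = γ₀ 0 := by simpa using hclosed 0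
  have hinner : ∀ s : ℝ, (∫ u in (0:ℝ)..1, DtG (s, u)) = 0 := by
    intro s
    rw [intervalIntegral.integral_eq_sub_of_hasDerivAt (fun u _ => key2 s u)
      ((hDtGcont.comp (continuous_const.prodMk continuous_id)).intervalIntegrable 0 1)]
    have hσeq : σ (s, 1) = σ (s, 0) := by simp [hσdef, hFdef, hγ01]
    rw [hσeq]; ring
  -- put everything together
  have hsub : circulation v φ γ₀ t - circulation v φ γ₀ 0
      = ∫ u in (0:ℝ)..1, ∫ s in (0:ℝ)..t, DtG (s, u) := by
    rw [hcirc t, hcirc 0, ← intervalIntegral.integral_sub (hGint t) (hGint 0)]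
    exact intervalIntegral.integral_congr fun u _ => hFTCt u
  have hswap : (∫ u in (0:ℝ)..1, ∫ s in (0:ℝ)..t, DtG (s, u))
      = ∫ s in (0:ℝ)..t, ∫ u in (0:ℝ)..1, DtG (s, u) :=
    interval_swap (fun q => DtG (q.2, q.1)) (hDtGcont.comp (continuous_snd.prodMk continuous_fst)) 0 1 0 t
  rw [hswap] at hsub
  simp only [hinner] at hsub
  simp only [intervalIntegral.integral_zero] at hsub
  linarith
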